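/- Let k be a field, V a k-vector space of dimension n with basis v_1,...,v_n, and set v_{n+1} := -v_1 - ... - v_n. Let a ∈ k be nonzero and let τ be a permutation of {1,...,n+1}. Define the k-linear map f: V → V by f(v_i) = a·v_{τ(i)} for i = 1,...,n (where v_{τ(i)} is interpreted via the relation above when τ(i) = n+1). Then the reversed characteristic polynomial of f equals (1/(1-aT)) · ∏_i (1 - (aT)^{d_i}), where {d_i} are the lengths of the cycles in the cycle decomposition of τ. -/

import Mathlib

/-!
Let `F` be the monomial map `e_j ↦ a e_{τ j}` on `k^{n+1}`. The map `w ↦ ∑ w_j v_j` identifies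
`V` with the quotient of `k^{n+1}` by the line of constant vectors and intertwines `F` with `f`,
while `F` acts on that line by `a`; hence `χ_F = χ_f · (X - a)` and the reversed polynomials
differ by the factor `1 - aT`.

The reversed characteristic polynomial of `F` is `det (1 - aT P_τ)`, which factors over the
cycles of `τ`: for disjoint `σ, π` one has `P_σ + P_π = 1 + P_{σπ}`, hence
`(1 - t P_σ)(1 - t P_π) = (1 - t)(1 - t P_{σπ})`, and a single cycle of length `d` contributes
`1 - t^d` by the Leibniz formula.
-/

open Polynomial Matrix

namespace Equiv.Perm

variable {β : Type*} [DecidableEq β]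

lemma permMatrix_add_permMatrix {R : Type*} [AddCommMonoidWithOne R] {σ π : Perm β}
    (h : σ.Disjoint π) : σ.permMatrix R + π.permMatrix R = 1 + (σ * π).permMatrix R := by
  ext i j
  simp only [Matrix.add_apply, PEquiv.toMatrix_apply, toPEquiv_apply, Option.mem_def,
    Option.some.injEq, Matrix.one_apply, coe_mul, Function.comp_apply]
  rcases h i with hi | hi
  · have hσπ : σ (π i) = π i := (h (π i)).elim id fun h' => by rw [π.injective h', hi]
    rw [hσπ, hi]
  · rw [hi, add_comm]

variable [Fintype β]

lemma prod_ite_apply_eq_self {M : Type*} [CommMonoid M] (σ : Perm β) (x y : M) :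
    ∏ i, (if σ i = i then x else y) =
      x ^ (Fintype.card β - σ.support.card) * y ^ σ.support.card := by
  rw [Finset.prod_ite, Finset.prod_const, Finset.prod_const, ← Finset.card_compl]
  congr 3
  ext; simp

lemma IsCycle.eq_one_or_eq_of_forall_apply {c π : Perm β} (hc : c.IsCycle)
    (h : ∀ i, π i = i ∨ π i = c i) : π = 1 ∨ π = c := by
  refine or_iff_not_imp_left.mpr fun hπ => ?_
  obtain ⟨x, hx⟩ : ∃ x, π x ≠ x := not_forall.mp fun H => hπ (Equiv.ext H)
  have hcx : c x ≠ x := (h x).resolve_left hx ▸ hx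
  have hpow : ∀ m : ℕ, π ((c ^ m) x) = c ((c ^ m) x) := by
    intro m
    induction m with
    | zero => exact (h x).resolve_left hx
    | succ m ih =>
      rw [pow_succ', mul_apply]
      refine (h _).resolve_left fun hfix => ?_
      have hmem : (c ^ m) x ∈ c.support := pow_apply_mem_support.mpr (mem_support.mpr hcx)
      exact mem_support.mp hmem (π.injective (hfix.trans ih.symm))
  ext y
  by_cases hy : c y = y
  · exact (h y).elim (·.trans hy.symm) id
  · obtain ⟨m, rfl⟩ := hc.exists_pow_eq hcx hy
    exact hpow m

variable {R : Type*} [CommRing R]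

/-- Only the identity and `c` contribute to the Leibniz expansion of `det (1 - t P_c)ᵀ`. -/
lemma IsCycle.det_one_sub_smul_permMatrix {c : Perm β} (hc : c.IsCycle) (t : R) :
    (1 - t • c.permMatrix R).det =
      (1 - t ^ c.support.card) * (1 - t) ^ (Fintype.card β - c.support.card) := by
  have hentry : ∀ (π : Perm β) i, (1 - t • c.permMatrix R)ᵀ (π i) i =
      (if π i = i then 1 else 0) - t * if π i = c i then 1 else 0 := by
    intro π i
    simp [PEquiv.toMatrix_apply, Matrix.one_apply, eq_comm]
  rw [← Matrix.det_transpose, Matrix.det_apply, Finset.sum_eq_add 1 c hc.ne_one.symm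
    (fun π _ hπ => ?vanish) (by simp) (by simp)]
  case vanish =>
    obtain ⟨i, hi⟩ : ∃ i, π i ≠ i ∧ π i ≠ c i := by
      by_contra! H
      exact (hc.eq_one_or_eq_of_forall_apply fun i => (em _).imp_right (H i)).elim hπ.1 hπ.2
    rw [Finset.prod_eq_zero (Finset.mem_univ i) (by rw [hentry, if_neg hi.1, if_neg hi.2]; ring),
      smul_zero]
  have hone : ∏ i, (1 - t • c.permMatrix R)ᵀ ((1 : Perm β) i) i =
      (1 - t) ^ (Fintype.card β - c.support.card) := by
    calc _ = ∏ i, (if c i = i then 1 - t else 1) := Finset.prod_congr rfl fun i _ => by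
          rw [hentry, one_apply]
          by_cases h : c i = i
          · simp [h]
          · simp [h, Ne.symm h]
      _ = _ := by rw [prod_ite_apply_eq_self, one_pow, mul_one]
  have hc' : ∏ i, (1 - t • c.permMatrix R)ᵀ (c i) i =
      (1 - t) ^ (Fintype.card β - c.support.card) * (-t) ^ c.support.card := by
    rw [← prod_ite_apply_eq_self]
    refine Finset.prod_congr rfl fun i _ => ?_
    rw [hentry]
    by_cases h : c i = i <;> simp [h]
  rw [hone, hc', hc.sign, sign_one, one_smul, Units.smul_def]
  push_cast
  linear_combination (-(t ^ c.support.card * (1 - t) ^ (Fintype.card β - c.support.card))) *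
    (even_two_mul c.support.card).neg_one_pow (α := R)

lemma det_one_sub_smul_permMatrix_mul_det {σ π : Perm β} (h : σ.Disjoint π) (t : R) :
    (1 - t • σ.permMatrix R).det * (1 - t • π.permMatrix R).det =
      (1 - t) ^ Fintype.card β * (1 - t • (σ * π).permMatrix R).det := by
  have key : (1 - t • σ.permMatrix R) * (1 - t • π.permMatrix R) =
      (1 - t) • (1 - t • (σ * π).permMatrix R) := by
    have hsum := permMatrix_add_permMatrix (R := R) h
    have hprod : σ.permMatrix R * π.permMatrix R = (σ * π).permMatrix R := by
      rw [← Matrix.permMatrix_mul, h.commute.eq]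
    calc (1 - t • σ.permMatrix R) * (1 - t • π.permMatrix R)
        = 1 - t • (σ.permMatrix R + π.permMatrix R) +
            (t * t) • (σ.permMatrix R * π.permMatrix R) := by
          simp only [sub_mul, mul_sub, smul_mul_smul_comm, one_mul, mul_one, smul_add]
          abel
      _ = (1 - t) • (1 - t • (σ * π).permMatrix R) := by rw [hsum, hprod]; module
  rw [← Matrix.det_mul, key, Matrix.det_smul]

lemma det_one_sub_smul_permMatrix_of_isRegular (t : R) (ht : IsRegular (1 - t)) (σ : Perm β) :
    (1 - t • σ.permMatrix R).det =
      (∏ c ∈ σ.cycleFactorsFinset, (1 - t ^ c.support.card)) *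
        (1 - t) ^ (Fintype.card β - σ.support.card) := by
  induction σ using cycle_induction_on with
  | base_one =>
    rw [Matrix.permMatrix_one, show (1 : Matrix β β R) - t • 1 = (1 - t) • 1 by
      rw [sub_smul, one_smul], Matrix.det_smul, Matrix.det_one, mul_one,
      cycleFactorsFinset_one, Finset.prod_empty, one_mul, support_one, Finset.card_empty,
      Nat.sub_zero]
  | base_cycles c hc =>
    rw [hc.det_one_sub_smul_permMatrix, hc.cycleFactorsFinset_eq_singleton, Finset.prod_singleton]
  | induction_disjoint σ π hd _ ihσ ihπ =>
    refine (ht.pow (Fintype.card β)).left ?_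
    beta_reduce
    rw [← det_one_sub_smul_permMatrix_mul_det hd, ihσ, ihπ, hd.cycleFactorsFinset_mul_eq_union,
      Finset.prod_union hd.disjoint_cycleFactorsFinset, hd.card_support_mul]
    have hle := hd.card_support_mul.symm.trans_le (Finset.card_le_univ (σ * π).support)
    rw [mul_mul_mul_comm, ← pow_add,
      show Fintype.card β - σ.support.card + (Fintype.card β - π.support.card) =
        Fintype.card β + (Fintype.card β - (σ.support.card + π.support.card)) by omega, pow_add]
    ring

/-- The cancellation in `det_one_sub_smul_permMatrix_of_isRegular` is justified in `R[X]` at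
`t = X`; evaluating at `t` gives the general case. -/
lemma det_one_sub_smul_permMatrix (t : R) (σ : Perm β) :
    (1 - t • σ.permMatrix R).det =
      (∏ c ∈ σ.cycleFactorsFinset, (1 - t ^ c.support.card)) *
        (1 - t) ^ (Fintype.card β - σ.support.card) := by
  have hX : IsRegular (1 - X : R[X]) := by
    simpa using isUnit_neg_one.isRegular.mul (monic_X_sub_C (1 : R)).isRegular
  have h := congrArg (evalRingHom t) (det_one_sub_smul_permMatrix_of_isRegular X hX σ)
  rw [RingHom.map_det] at h
  convert h using 2
  · ext i j
    simp [PEquiv.toMatrix_apply, Matrix.one_apply, apply_ite (eval t)]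
  · simp [eval_prod]

end Equiv.Perm

namespace LinearMap

variable {R M₁ M₂ : Type*} [CommRing R] [AddCommGroup M₁] [Module R M₁] [Module.Free R M₁]
  [Module.Finite R M₁] [AddCommGroup M₂] [Module R M₂] [Module.Free R M₂] [Module.Finite R M₂]

lemma charpoly_eq_mul_of_fst_apply {G : Module.End R (M₁ × M₂)} {f₁ : Module.End R M₁}
    {f₂ : Module.End R M₂} (h₁ : ∀ x, (G x).1 = f₁ x.1) (h₂ : ∀ y, (G (0, y)).2 = f₂ y) :
    G.charpoly = f₁.charpoly * f₂.charpoly := by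
  let b₁ := Module.Free.chooseBasis R M₁
  let b₂ := Module.Free.chooseBasis R M₂
  set A := toMatrix (b₁.prod b₂) (b₁.prod b₂) G
  have h₁₁ : A.toBlocks₁₁ = toMatrix b₁ b₁ f₁ := by
    ext i j
    simp [A, toBlocks₁₁, toMatrix_apply, h₁]
  have h₁₂ : A.toBlocks₁₂ = 0 := by
    ext i j
    simp [A, toBlocks₁₂, toMatrix_apply, h₁]
  have h₂₂ : A.toBlocks₂₂ = toMatrix b₂ b₂ f₂ := by
    ext i j
    simp [A, toBlocks₂₂, toMatrix_apply, h₂]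
  calc G.charpoly = A.charpoly := (charpoly_toMatrix G _).symm
    _ = f₁.charpoly * f₂.charpoly := by
      rw [← fromBlocks_toBlocks A, h₁₁, h₁₂, h₂₂, charpoly_fromBlocks_zero₁₂, charpoly_toMatrix,
        charpoly_toMatrix]

lemma charpoly_smul_id (a : R) : (a • LinearMap.id : Module.End R R).charpoly = X - C a := by
  rw [← charpoly_toMatrix _ (Module.Basis.singleton Unit R)]
  simp [Matrix.charpoly, det_unique, Module.Basis.toMatrix_apply]

end LinearMap

lemma Polynomial.reverse_X_sub_C {R : Type*} [CommRing R] [Nontrivial R] (a : R) :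
    (X - C a).reverse = 1 - C a * X := by
  rw [reverse, natDegree_X_sub_C, reflect_sub, reflect_one_X, reflect_C, pow_one]

lemma Matrix.toLin'_smul_transpose_permMatrix {β R : Type*} [Fintype β] [DecidableEq β]
    [CommRing R] (a : R) (τ : Equiv.Perm β) (w : β → R) :
    toLin' (a • (τ.permMatrix R)ᵀ) w = a • (w ∘ τ.symm) := by
  rw [toLin'_apply, smul_mulVec, transpose_permMatrix, permMatrix_mulVec]
  rfl

lemma Matrix.reverse_charpoly_smul_transpose_permMatrix {β R : Type*} [Fintype β]
    [DecidableEq β] [CommRing R] (a : R) (τ : Equiv.Perm β) :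
    (a • (τ.permMatrix R)ᵀ).charpoly.reverse = (1 - (C a * X) • τ.permMatrix R[X]).det := by
  rw [reverse_charpoly, charpolyRev, ← det_transpose]
  congr 1
  ext i j : 1
  simp [PEquiv.toMatrix_apply, one_apply, eq_comm, Equiv.eq_symm_apply, apply_ite C]

/-- The first component is the quotient map by the constant vectors; in the setting of the main
theorem it sends `Pi.single j 1` to `v j`. -/
def piFinSuccSubLast (R : Type*) [CommRing R] (n : ℕ) :
    (Fin (n + 1) → R) ≃ₗ[R] (Fin n → R) × R where
  toFun w := (fun i => w i.castSucc - w (Fin.last n), w (Fin.last n))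
  invFun p := Fin.snoc (fun i => p.1 i + p.2) p.2
  map_add' w w' := by ext <;> simp; ring
  map_smul' c w := by ext <;> simp; ring
  left_inv w := by
    ext j
    induction j using Fin.lastCases <;> simp
  right_inv p := by ext <;> simp

lemma piFinSuccSubLast_symm_zero (R : Type*) [CommRing R] (n : ℕ) (s : R) :
    (piFinSuccSubLast R n).symm (0, s) = fun _ => s := by
  ext j
  induction j using Fin.lastCases <;> simp [piFinSuccSubLast]

section QuotientByConstants

variable {R : Type*} [CommRing R] {n : ℕ} {v : Fin (n + 1) → Fin n → R}

lemma sum_eq_zero_of_last_eq_neg_sum (hv : ∀ i : Fin n, v i.castSucc = Pi.single i 1)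
    (hlast : v (Fin.last n) = -∑ i : Fin n, Pi.single i 1) : ∑ j, v j = 0 := by
  rw [Fin.sum_univ_castSucc, hlast]
  simp [hv]

lemma piFinSuccSubLast_single_fst (hv : ∀ i : Fin n, v i.castSucc = Pi.single i 1)
    (hlast : v (Fin.last n) = -∑ i : Fin n, Pi.single i 1) (j : Fin (n + 1)) :
    (piFinSuccSubLast R n (Pi.single j 1)).1 = v j := by
  induction j using Fin.lastCases with
  | last => ext i; simp [piFinSuccSubLast, hlast, Pi.single_apply]
  | cast m => ext i; simp [piFinSuccSubLast, hv, Pi.single_apply]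

variable {f : Module.End R (Fin n → R)} {a : R} {τ : Equiv.Perm (Fin (n + 1))}

lemma piFinSuccSubLast_fst_toLin'_smul_transpose_permMatrix
    (hv : ∀ i : Fin n, v i.castSucc = Pi.single i 1)
    (hlast : v (Fin.last n) = -∑ i : Fin n, Pi.single i 1)
    (hf : ∀ i : Fin n, f (v i.castSucc) = a • v (τ i.castSucc)) (w : Fin (n + 1) → R) :
    (piFinSuccSubLast R n (toLin' (a • (τ.permMatrix R)ᵀ) w)).1 =
      f (piFinSuccSubLast R n w).1 := by
  let π := LinearMap.fst R (Fin n → R) R ∘ₗ (piFinSuccSubLast R n).toLinearMap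
  suffices π ∘ₗ toLin' (a • (τ.permMatrix R)ᵀ) = f ∘ₗ π from LinearMap.congr_fun this w
  refine (Pi.basisFun R _).ext fun j => ?_
  rw [LinearMap.comp_apply, LinearMap.comp_apply, Pi.basisFun_apply,
    toLin'_smul_transpose_permMatrix, Pi.single_comp_equiv, Equiv.symm_symm, map_smul]
  simp only [π, LinearMap.comp_apply, LinearMap.fst_apply, LinearEquiv.coe_coe, Prod.smul_fst,
    piFinSuccSubLast_single_fst hv hlast]
  induction j using Fin.lastCases with
  | cast m => exact (hf m).symm
  | last =>
    have hsum : ∑ i : Fin n, v (τ i.castSucc) = -v (τ (Fin.last n)) := by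
      rw [eq_neg_iff_add_eq_zero, ← Fin.sum_univ_castSucc (fun j => v (τ j)), Equiv.sum_comp,
        sum_eq_zero_of_last_eq_neg_sum hv hlast]
    have hvlast : v (Fin.last n) = -∑ i : Fin n, v i.castSucc := by simp [hlast, hv]
    rw [hvlast, map_neg, map_sum]
    simp_rw [hf]
    rw [← Finset.smul_sum, hsum, smul_neg, neg_neg]

lemma charpoly_toLin'_smul_transpose_permMatrix
    (hv : ∀ i : Fin n, v i.castSucc = Pi.single i 1)
    (hlast : v (Fin.last n) = -∑ i : Fin n, Pi.single i 1)
    (hf : ∀ i : Fin n, f (v i.castSucc) = a • v (τ i.castSucc)) :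
    (toLin' (a • (τ.permMatrix R)ᵀ)).charpoly = f.charpoly * (X - C a) := by
  rw [← (piFinSuccSubLast R n).charpoly_conj, ← LinearMap.charpoly_smul_id a]
  refine LinearMap.charpoly_eq_mul_of_fst_apply (fun x => ?_) (fun s => ?_)
  · simpa [LinearEquiv.conj_apply] using
      piFinSuccSubLast_fst_toLin'_smul_transpose_permMatrix hv hlast hf
        ((piFinSuccSubLast R n).symm x)
  · rw [LinearEquiv.conj_apply, LinearMap.comp_apply, LinearMap.comp_apply, LinearEquiv.coe_coe,
      LinearEquiv.coe_coe, piFinSuccSubLast_symm_zero, toLin'_smul_transpose_permMatrix]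
    simp [piFinSuccSubLast]

end QuotientByConstants

theorem stmt_0_general (n : ℕ) (k : Type*) [Field k] (a : k)
    (τ : Equiv.Perm (Fin (n + 1)))
    (v : Fin (n + 1) → (Fin n → k))
    (hv : ∀ i : Fin n, v i.castSucc = Pi.single i (1 : k))
    (hlast : v (Fin.last n) = -∑ i : Fin n, Pi.single i (1 : k))
    (f : (Fin n → k) →ₗ[k] (Fin n → k))
    (hf : ∀ i : Fin n, f (v i.castSucc) = a • v (τ i.castSucc)) :
    (1 - C a * X) * (LinearMap.charpoly f).reverse =
      (∏ c ∈ τ.cycleFactorsFinset, (1 - (C a * X) ^ c.support.card)) *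
        (1 - C a * X) ^ (n + 1 - τ.support.card) := by
  have h := congrArg reverse (charpoly_toLin'_smul_transpose_permMatrix hv hlast hf)
  rw [charpoly_toLin', reverse_charpoly_smul_transpose_permMatrix,
    Equiv.Perm.det_one_sub_smul_permMatrix, reverse_mul_of_domain, reverse_X_sub_C,
    Fintype.card_fin] at h
  rw [mul_comm, ← h]

/-- Let `k` be a field, `V = Fin n → k` an `n`-dimensional `k`-vector space with basis
`v 1, …, v n` (the standard basis), and set `v (n+1) := -v 1 - ⋯ - v n`. Let `a ≠ 0` and
`τ` a permutation of `{1, …, n+1}`. If `f : V →ₗ[k] V` satisfies `f (v i) = a • v (τ i)`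
for `i = 1, …, n`, then the reversed characteristic polynomial of `f` equals
`(1/(1 - aT)) * ∏ (1 - (aT)^d)` over the cycle lengths `d` of `τ` (fixed points
contributing cycles of length 1). -/
theorem stmt_0 (n : ℕ) (k : Type*) [Field k] (a : k) (ha : a ≠ 0)
    (τ : Equiv.Perm (Fin (n + 1)))
    (v : Fin (n + 1) → (Fin n → k))
    (hv : ∀ i : Fin n, v i.castSucc = Pi.single i (1 : k))
    (hlast : v (Fin.last n) = -∑ i : Fin n, Pi.single i (1 : k))
    (f : (Fin n → k) →ₗ[k] (Fin n → k))
    (hf : ∀ i : Fin n, f (v i.castSucc) = a • v (τ i.castSucc)) :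
    (1 - C a * X) * (LinearMap.charpoly f).reverse =
      (∏ c ∈ τ.cycleFactorsFinset, (1 - (C a * X) ^ c.support.card)) *
        (1 - C a * X) ^ (n + 1 - τ.support.card) :=
  stmt_0_general n k a τ v hv hlast f hf
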